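/- arXiv:2004.00195 — 7 statements merged into one kernel-verified Lean document; each statement's English description precedes it below -/
import Mathlib

section
/- If there exists a nonzero v ∈ V with ℓᵢ(v) = 0 for all i and Q(v) ≠ 0, then for every map R : ℝ^m → ℝ and every y in the range of L restricted to K = {f : dist(f,V) ≤ ε}, the local worst-case error sup{|Q(f) - R(y)| : f ∈ K, L(f) = y} is infinite. -/
/-- If there is a nonzero `v ∈ V` with `ℓᵢ(v) = 0` for all `i` and `Q(v) ≠ 0`, then for every
recovery map `R` and every observation `y = L f₀` of a model-consistent `f₀`, the local
worst-case error over the approximability set `{f : dist(f,V) ≤ ε}` is infinite. -/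
theorem stmt_0 {X : Type*} [NormedAddCommGroup X] [NormedSpace ℝ X]
    (V : Submodule ℝ X) (ε : ℝ) (hε : 0 < ε) {m : ℕ}
    (Q : X →L[ℝ] ℝ) (ℓ : Fin m → X →L[ℝ] ℝ)
    (v : X) (hvV : v ∈ V) (hv0 : v ≠ 0) (hvL : ∀ i, ℓ i v = 0) (hvQ : Q v ≠ 0)
    (R : (Fin m → ℝ) → ℝ) (f₀ : X) (hf₀ : Metric.infDist f₀ (V : Set X) ≤ ε) :
    ∀ C : ℝ, ∃ f : X,
      Metric.infDist f (V : Set X) ≤ ε ∧ (∀ i, ℓ i f = ℓ i f₀) ∧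
      C < |Q f - R (fun i => ℓ i f₀)| := by
  intro C
  set c : ℝ := Q f₀ - R (fun i => ℓ i f₀) with hc
  set t : ℝ := (C + |c| + 1) / Q v with ht
  refine ⟨f₀ + t • v, ?_, ?_, ?_⟩
  · have hiso : Isometry (fun x : X => x + t • v) :=
      Isometry.of_dist_eq (fun a b => by simp [dist_eq_norm])
    have himg : (fun x : X => x + t • v) '' (V : Set X) = (V : Set X) := by
      ext x
      constructor
      · rintro ⟨y, hy, rfl⟩
        exact V.add_mem hy (V.smul_mem t hvV)
      · intro hx
        exact ⟨x - t • v, V.sub_mem hx (V.smul_mem t hvV), by module⟩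
    have := Metric.infDist_image (Φ := fun x : X => x + t • v) (x := f₀) (t := (V : Set X)) hiso
    rw [himg] at this
    simpa [this] using hf₀
  · intro i
    simp [map_add, map_smul, hvL i]
  · have hQ : Q (f₀ + t • v) = Q f₀ + t * Q v := by simp [map_add, map_smul]
    have htQ : t * Q v = C + |c| + 1 := div_mul_cancel₀ _ hvQ
    have : Q (f₀ + t • v) - R (fun i => ℓ i f₀) = c + (C + |c| + 1) := by
      rw [hQ, htQ, hc]; ring
    rw [this]
    have h1 : C + 1 ≤ |c + (C + |c| + 1)| := by
      have := abs_add_le c (C + |c| + 1)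
      have h2 := neg_abs_le c
      calc C + 1 ≤ c + (C + |c| + 1) := by linarith
        _ ≤ |c + (C + |c| + 1)| := le_abs_self _
    linarith
end

section
/- For any a ∈ ℝ^m, the worst-case error over the bounded approximability set of the second type splits as a sum: sup{|Q(f) − Σᵢ aᵢ ℓᵢ(f)| : f ∈ K} = ε·‖Q − Σᵢ aᵢ ℓᵢ‖_{X*} + κ·sup{|Q(v) − Σᵢ aᵢ ℓᵢ(v)| : v ∈ V, ‖v‖ ≤ 1}, where K = {f ∈ X : ∃ v ∈ V with ‖f − v‖ ≤ ε and ‖v‖ ≤ κ}. -/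
open scoped BigOperators

/-- The worst-case error over the bounded approximability set of the second type splits as
`ε·‖Q − Σ aᵢ ℓᵢ‖ + κ·sup_{v ∈ B_V} |Q(v) − Σ aᵢ ℓᵢ(v)|`. -/
theorem stmt_2 {X : Type*} [NormedAddCommGroup X] [NormedSpace ℝ X]
    (V : Submodule ℝ X) (ε κ : ℝ) (hε : 0 < ε) (hκ : 0 < κ) {m : ℕ}
    (Q : X →L[ℝ] ℝ) (ℓ : Fin m → X →L[ℝ] ℝ) (a : Fin m → ℝ) :
    sSup {r : ℝ | ∃ f : X, (∃ v ∈ V, ‖f - v‖ ≤ ε ∧ ‖v‖ ≤ κ) ∧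
        r = |Q f - ∑ i, a i * ℓ i f|}
      = ε * ‖Q - ∑ i, a i • ℓ i‖
        + κ * sSup {r : ℝ | ∃ v ∈ V, ‖v‖ ≤ 1 ∧ r = |Q v - ∑ i, a i * ℓ i v|} := by
  set T : X →L[ℝ] ℝ := Q - ∑ i, a i • ℓ i with hT
  have happ : ∀ f : X, Q f - ∑ i, a i * ℓ i f = T f := by
    intro f
    simp [hT, ContinuousLinearMap.sub_apply, ContinuousLinearMap.sum_apply,
      ContinuousLinearMap.smul_apply, smul_eq_mul]
  simp only [happ]
  set Aset : Set ℝ := {r : ℝ | ∃ f : X, (∃ v ∈ V, ‖f - v‖ ≤ ε ∧ ‖v‖ ≤ κ) ∧ r = |T f|}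
    with hAset
  set Bset : Set ℝ := {r : ℝ | ∃ v ∈ V, ‖v‖ ≤ 1 ∧ r = |T v|} with hBset
  have habs : ∀ x : X, |T x| = ‖T x‖ := fun x => (Real.norm_eq_abs _).symm
  -- bounds for Bset
  have hBub : ∀ r ∈ Bset, r ≤ ‖T‖ := by
    rintro r ⟨v, hv, hv1, rfl⟩
    rw [habs]
    calc ‖T v‖ ≤ ‖T‖ * ‖v‖ := T.le_opNorm v
      _ ≤ ‖T‖ * 1 := by gcongr
      _ = ‖T‖ := mul_one _
  have hBbdd : BddAbove Bset := ⟨‖T‖, hBub⟩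
  have hBne : (0 : ℝ) ∈ Bset := ⟨0, V.zero_mem, by simp⟩
  have hS0 : 0 ≤ sSup Bset := le_csSup hBbdd hBne
  -- any v ∈ V with ‖v‖ ≤ κ has |T v| ≤ κ * sSup Bset
  have hvle : ∀ v ∈ V, ‖v‖ ≤ κ → |T v| ≤ κ * sSup Bset := by
    intro v hv hvκ
    have hmem : |T (κ⁻¹ • v)| ∈ Bset := by
      refine ⟨κ⁻¹ • v, V.smul_mem _ hv, ?_, rfl⟩
      rw [norm_smul, Real.norm_eq_abs, abs_of_pos (inv_pos.mpr hκ)]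
      rw [inv_mul_le_iff₀ hκ, mul_one]
      exact hvκ
    have hle : |T (κ⁻¹ • v)| ≤ sSup Bset := le_csSup hBbdd hmem
    have hval : |T (κ⁻¹ • v)| = κ⁻¹ * |T v| := by
      rw [map_smul, smul_eq_mul, abs_mul, abs_of_pos (inv_pos.mpr hκ)]
    rw [hval] at hle
    calc |T v| = κ * (κ⁻¹ * |T v|) := by field_simp
      _ ≤ κ * sSup Bset := by gcongr
  -- upper bounds for Aset
  have hAub : ∀ r ∈ Aset, r ≤ ε * ‖T‖ + κ * sSup Bset := by
    rintro r ⟨f, ⟨v, hv, hfv, hvκ⟩, rfl⟩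
    have h1 : |T f| ≤ |T (f - v)| + |T v| := by
      have : T f = T (f - v) + T v := by rw [map_sub]; ring
      rw [this]; exact abs_add_le _ _
    have h2 : |T (f - v)| ≤ ε * ‖T‖ := by
      rw [habs]
      calc ‖T (f - v)‖ ≤ ‖T‖ * ‖f - v‖ := T.le_opNorm _
        _ ≤ ‖T‖ * ε := by gcongr
        _ = ε * ‖T‖ := mul_comm _ _
    linarith [hvle v hv hvκ]
  have hAbdd : BddAbove Aset := ⟨_, hAub⟩
  have hAne : Aset.Nonempty := ⟨0, 0, ⟨0, V.zero_mem, by simp [le_of_lt hε, le_of_lt hκ], ⟩, by simp⟩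
  refine le_antisymm (csSup_le hAne hAub) ?_
  rw [le_csSup_iff hAbdd hAne]
  intro b hb
  -- key: for unit g and unit v ∈ V, ε|T g| + κ|T v| ≤ b
  have key : ∀ g : X, ‖g‖ ≤ 1 → ∀ v ∈ V, ‖v‖ ≤ 1 → ε * |T g| + κ * |T v| ≤ b := by
    intro g hg v hv hv1
    set g' : X := if 0 ≤ T g then g else -g with hg'
    set v' : X := if 0 ≤ T v then v else -v with hv'
    have hTg' : T g' = |T g| := by
      by_cases h : 0 ≤ T g <;> simp [hg', h, abs_of_nonneg, abs_of_neg, le_of_not_ge] <;>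
        rw [abs_of_neg (lt_of_not_ge h)]
    have hTv' : T v' = |T v| := by
      by_cases h : 0 ≤ T v <;> simp [hv', h, abs_of_nonneg, abs_of_neg, le_of_not_ge] <;>
        rw [abs_of_neg (lt_of_not_ge h)]
    have hg'n : ‖g'‖ ≤ 1 := by by_cases h : 0 ≤ T g <;> simp [hg', h, hg]
    have hv'n : ‖v'‖ ≤ 1 := by by_cases h : 0 ≤ T v <;> simp [hv', h, hv1]
    have hv'V : v' ∈ V := by
      by_cases h : 0 ≤ T v <;> simp [hv', h, hv, V.neg_mem hv]
    have hmem : |T (ε • g' + κ • v')| ∈ Aset := by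
      refine ⟨ε • g' + κ • v', ⟨κ • v', V.smul_mem _ hv'V, ?_, ?_⟩, rfl⟩
      · simp only [add_sub_cancel_right]
        rw [norm_smul, Real.norm_eq_abs, abs_of_pos hε]
        calc ε * ‖g'‖ ≤ ε * 1 := by gcongr
          _ = ε := mul_one _
      · rw [norm_smul, Real.norm_eq_abs, abs_of_pos hκ]
        calc κ * ‖v'‖ ≤ κ * 1 := by gcongr
          _ = κ := mul_one _
    have hle : |T (ε • g' + κ • v')| ≤ b := hb hmem
    have hval : T (ε • g' + κ • v') = ε * |T g| + κ * |T v| := by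
      rw [map_add, map_smul, map_smul, smul_eq_mul, smul_eq_mul, hTg', hTv']
    have hnn : 0 ≤ ε * |T g| + κ * |T v| := by positivity
    rwa [hval, abs_of_nonneg hnn] at hle
  -- deduce ε‖T‖ + κ|T v| ≤ b for all unit v ∈ V
  have key2 : ∀ v ∈ V, ‖v‖ ≤ 1 → ε * ‖T‖ + κ * |T v| ≤ b := by
    intro v hv hv1
    have hb0 : κ * |T v| ≤ b := by
      have := key 0 (by simp) v hv hv1
      simpa using this
    have hC : 0 ≤ (b - κ * |T v|) / ε := by
      apply div_nonneg _ (le_of_lt hε); linarith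
    have hTnorm : ‖T‖ ≤ (b - κ * |T v|) / ε := by
      apply T.opNorm_le_bound hC
      intro x
      rcases eq_or_ne x 0 with rfl | hx
      · simp
      · have hxn : (0:ℝ) < ‖x‖ := norm_pos_iff.mpr hx
        have hgx : ‖(‖x‖⁻¹ • x : X)‖ ≤ 1 := by
          rw [norm_smul, Real.norm_eq_abs, abs_of_pos (inv_pos.mpr hxn),
            inv_mul_cancel₀ (ne_of_gt hxn)]
        have := key _ hgx v hv hv1
        have hTgx : |T (‖x‖⁻¹ • x)| = ‖x‖⁻¹ * |T x| := by
          rw [map_smul, smul_eq_mul, abs_mul, abs_of_pos (inv_pos.mpr hxn)]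
        rw [hTgx] at this
        have h1 : ε * (‖x‖⁻¹ * |T x|) ≤ b - κ * |T v| := by linarith
        rw [Real.norm_eq_abs, le_div_iff₀ hε] at *
        calc |T x| = ‖x‖ * (‖x‖⁻¹ * |T x|) := by field_simp
          _ ≤ ‖x‖ * ((b - κ * |T v|) / ε) := by
              gcongr
              rw [le_div_iff₀ hε]; linarith
          _ = (b - κ * |T v|) / ε * ‖x‖ := mul_comm _ _
    rw [le_div_iff₀ hε] at hTnorm
    linarith [mul_comm ‖T‖ ε]
  -- finish: κ * sSup Bset ≤ b - ε‖T‖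
  have hSle : sSup Bset ≤ (b - ε * ‖T‖) / κ := by
    apply csSup_le ⟨0, hBne⟩
    rintro r ⟨v, hv, hv1, rfl⟩
    rw [le_div_iff₀ hκ]
    have := key2 v hv hv1
    linarith [mul_comm (|T v|) κ]
  rw [le_div_iff₀ hκ] at hSle
  linarith [mul_comm (sSup Bset) κ]
end

section
/- Substitution decomposition: sup{|φ(f)| : f ∈ X, ∃ v ∈ V, ‖f − v‖ ≤ ε, ‖v‖ ≤ κ} = sup{|φ(h)| : ‖h‖ ≤ ε} + sup{|φ(v)| : v ∈ V, ‖v‖ ≤ κ} for any continuous linear functional φ on X. -/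
private lemma abs_add_of_mul_nonneg {a b : ℝ} (h : 0 ≤ a * b) : |a + b| = |a| + |b| := by
  rcases abs_cases a with ⟨ha, ha'⟩ | ⟨ha, ha'⟩ <;>
  rcases abs_cases b with ⟨hb, hb'⟩ | ⟨hb, hb'⟩ <;>
  rcases abs_cases (a + b) with ⟨hc, hc'⟩ | ⟨hc, hc'⟩ <;> nlinarith

/-- Substitution decomposition: the supremum of `|φ(f)|` over the bounded approximability set
of the second type equals `sup_{‖h‖ ≤ ε} |φ(h)| + sup_{v ∈ V, ‖v‖ ≤ κ} |φ(v)|`. -/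
theorem stmt_3 {X : Type*} [NormedAddCommGroup X] [NormedSpace ℝ X]
    (V : Submodule ℝ X) (ε κ : ℝ) (hε : 0 < ε) (hκ : 0 < κ) (φ : X →L[ℝ] ℝ) :
    sSup {r : ℝ | ∃ f : X, (∃ v ∈ V, ‖f - v‖ ≤ ε ∧ ‖v‖ ≤ κ) ∧ r = |φ f|}
      = sSup {r : ℝ | ∃ h : X, ‖h‖ ≤ ε ∧ r = |φ h|}
        + sSup {r : ℝ | ∃ v ∈ V, ‖v‖ ≤ κ ∧ r = |φ v|} := by
  set A := {r : ℝ | ∃ f : X, (∃ v ∈ V, ‖f - v‖ ≤ ε ∧ ‖v‖ ≤ κ) ∧ r = |φ f|} with hA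
  set B := {r : ℝ | ∃ h : X, ‖h‖ ≤ ε ∧ r = |φ h|} with hB
  set C := {r : ℝ | ∃ v ∈ V, ‖v‖ ≤ κ ∧ r = |φ v|} with hC
  have hAne : A.Nonempty := ⟨|φ 0|, 0, ⟨0, V.zero_mem, by simpa using ⟨hε.le, hκ.le⟩⟩, rfl⟩
  have hBne : B.Nonempty := ⟨|φ 0|, 0, by simpa using hε.le, rfl⟩
  have hCne : C.Nonempty := ⟨|φ 0|, 0, V.zero_mem, by simpa using hκ.le, rfl⟩
  have hBbdd : ∀ r ∈ B, r ≤ ε * ‖φ‖ := by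
    rintro r ⟨h, hh, rfl⟩
    calc |φ h| ≤ ‖φ‖ * ‖h‖ := φ.le_opNorm h
    _ ≤ ‖φ‖ * ε := by nlinarith [norm_nonneg φ]
    _ = ε * ‖φ‖ := mul_comm _ _
  have hCbdd : ∀ r ∈ C, r ≤ κ * ‖φ‖ := by
    rintro r ⟨v, _, hv, rfl⟩
    calc |φ v| ≤ ‖φ‖ * ‖v‖ := φ.le_opNorm v
    _ ≤ ‖φ‖ * κ := by nlinarith [norm_nonneg φ]
    _ = κ * ‖φ‖ := mul_comm _ _
  have hAbdd : ∀ r ∈ A, r ≤ (ε + κ) * ‖φ‖ := by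
    rintro r ⟨f, ⟨v, _, hfv, hv⟩, rfl⟩
    have h1 : |φ (f - v)| ≤ ‖φ‖ * ε := by
      have := φ.le_opNorm (f - v)
      rw [Real.norm_eq_abs] at this
      nlinarith [norm_nonneg φ]
    have h2 : |φ v| ≤ ‖φ‖ * κ := by
      have := φ.le_opNorm v
      rw [Real.norm_eq_abs] at this
      nlinarith [norm_nonneg φ]
    have : φ f = φ (f - v) + φ v := by simp
    calc |φ f| ≤ |φ (f - v)| + |φ v| := by rw [this]; exact abs_add_le _ _
    _ ≤ (ε + κ) * ‖φ‖ := by nlinarith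
  have hAbdda : BddAbove A := ⟨(ε + κ) * ‖φ‖, hAbdd⟩
  have hBbdda : BddAbove B := ⟨ε * ‖φ‖, hBbdd⟩
  have hCbdda : BddAbove C := ⟨κ * ‖φ‖, hCbdd⟩
  apply le_antisymm
  · apply csSup_le hAne
    rintro r ⟨f, ⟨v, hvV, hfv, hv⟩, rfl⟩
    have h1 : |φ (f - v)| ≤ sSup B := le_csSup hBbdda ⟨f - v, hfv, rfl⟩
    have h2 : |φ v| ≤ sSup C := le_csSup hCbdda ⟨v, hvV, hv, rfl⟩
    have : φ f = φ (f - v) + φ v := by simp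
    calc |φ f| ≤ |φ (f - v)| + |φ v| := by rw [this]; exact abs_add_le _ _
    _ ≤ sSup B + sSup C := add_le_add h1 h2
  · -- key: for b ∈ B, c ∈ C, b + c ∈ A
    have key : ∀ b ∈ B, ∀ c ∈ C, b + c ≤ sSup A := by
      rintro b ⟨h, hh, rfl⟩ c ⟨v, hvV, hv, rfl⟩
      set h' : X := if 0 ≤ φ h * φ v then h else -h with hh'
      have hsign : 0 ≤ φ h' * φ v := by
        by_cases hc : 0 ≤ φ h * φ v
        · simp [hh', hc]
        · simp only [hh', if_neg hc, map_neg]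
          nlinarith
      have hnorm : ‖h'‖ ≤ ε := by
        by_cases hc : 0 ≤ φ h * φ v <;> simp [hh', hc, hh]
      have habs : |φ h'| = |φ h| := by
        by_cases hc : 0 ≤ φ h * φ v <;> simp [hh', hc]
      have hmem : |φ h| + |φ v| ∈ A := by
        refine ⟨h' + v, ⟨v, hvV, by simpa using hnorm, hv⟩, ?_⟩
        rw [map_add, abs_add_of_mul_nonneg hsign, habs]
      exact le_csSup hAbdda hmem
    have h1 : ∀ c ∈ C, sSup B + c ≤ sSup A := by
      intro c hc
      have : sSup B ≤ sSup A - c := csSup_le hBne (fun b hb => by linarith [key b hb c hc])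
      linarith
    have : sSup C ≤ sSup A - sSup B := csSup_le hCne (fun c hc => by linarith [h1 c hc])
    linarith
end

section
/- For any a ∈ ℝ^m and any pair of continuous linear functionals μ, ν on X satisfying μ + ν = Q − Σᵢ aᵢ ℓᵢ and μ vanishing on V, the worst-case error sup{|Q(f) − Σᵢ aᵢ ℓᵢ(f)| : f ∈ X, dist(f,V) ≤ ε, ‖f‖ ≤ κ} is bounded above by ε·‖μ‖_{X*} + κ·‖ν‖_{X*}. -/
open scoped BigOperators

/-- If `μ + ν = Q − Σ aᵢ ℓᵢ` with `μ` vanishing on `V`, then the worst-case error over the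
bounded approximability set of the first type is at most `ε‖μ‖ + κ‖ν‖`. -/
theorem stmt_4 {X : Type*} [NormedAddCommGroup X] [NormedSpace ℝ X]
    (V : Submodule ℝ X) (ε κ : ℝ) (hε : 0 < ε) (hκ : 0 < κ) {m : ℕ}
    (Q : X →L[ℝ] ℝ) (ℓ : Fin m → X →L[ℝ] ℝ) (a : Fin m → ℝ)
    (μ ν : X →L[ℝ] ℝ) (hsum : μ + ν = Q - ∑ i, a i • ℓ i)
    (hμV : ∀ v ∈ V, μ v = 0) :
    ∀ f : X, Metric.infDist f (V : Set X) ≤ ε → ‖f‖ ≤ κ →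
      |Q f - ∑ i, a i * ℓ i f| ≤ ε * ‖μ‖ + κ * ‖ν‖ := by
  intro f hdist hnorm
  have key : Q f - ∑ i, a i * ℓ i f = μ f + ν f := by
    have := congrArg (fun g : X →L[ℝ] ℝ => g f) hsum
    simp at this
    linarith
  have hμf : |μ f| ≤ ‖μ‖ * Metric.infDist f (V : Set X) := by
    have hne : ((V : Set X)).Nonempty := ⟨0, V.zero_mem⟩
    rw [Metric.infDist_eq_iInf, Real.mul_iInf_of_nonneg (norm_nonneg μ)]
    apply le_ciInf
    intro ⟨v, hv⟩
    have : μ f = μ (f - v) := by simp [map_sub, hμV v hv]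
    rw [this]
    calc |μ (f - v)| ≤ ‖μ‖ * ‖f - v‖ := μ.le_opNorm _
      _ = ‖μ‖ * dist f v := by rw [dist_eq_norm]
  have hνf : |ν f| ≤ ‖ν‖ * ‖f‖ := ν.le_opNorm f
  calc |Q f - ∑ i, a i * ℓ i f| = |μ f + ν f| := by rw [key]
    _ ≤ |μ f| + |ν f| := abs_add_le _ _
    _ ≤ ‖μ‖ * Metric.infDist f (V : Set X) + ‖ν‖ * ‖f‖ := add_le_add hμf hνf
    _ ≤ ‖μ‖ * ε + ‖ν‖ * κ := add_le_add
        (mul_le_mul_of_nonneg_left hdist (norm_nonneg _))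
        (mul_le_mul_of_nonneg_left hnorm (norm_nonneg _))
    _ = ε * ‖μ‖ + κ * ‖ν‖ := by ring
end

section
/- For the normalized integral quantity of interest: for distinct points x₁,…,x_m ∈ [−1,1] and any a ∈ ℝ^m, the dual norm on C[−1,1] of the functional f ↦ (1/2)∫_{−1}^1 f(x)dx − Σᵢ aᵢ f(xᵢ) equals 1 + Σᵢ |aᵢ|. -/
open scoped BigOperators MeasureTheory

attribute [local instance] MeasureTheory.Measure.Subtype.measureSpace

/-!
The bound `≤` is the triangle inequality: `(1/2) ∫` has total mass one and `|f| ≤ 1`.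
For `≥`, take `f` equal to `1` except on `δ`-neighbourhoods of the nodes, where tents pull it
down to `-sign aᵢ` at `xᵢ`. Once `δ` separates the nodes, `Σ aᵢ f(xᵢ) = -Σ |aᵢ|`, and
`∫ f → 2` as `δ → 0` by dominated convergence, because `f → 1` off the finitely many nodes.
-/

open MeasureTheory Set Filter Topology

noncomputable def tent (δ c t : ℝ) : ℝ := max 0 (1 - |t - c| / δ)

lemma continuous_tent (δ c : ℝ) : Continuous (tent δ c) := by
  unfold tent; fun_prop

lemma tent_nonneg (δ c t : ℝ) : 0 ≤ tent δ c t := le_max_left _ _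

@[simp] lemma tent_self (δ c : ℝ) : tent δ c c = 1 := by simp [tent]

lemma tent_eq_zero {δ c t : ℝ} (hδ : 0 < δ) (h : δ ≤ |t - c|) : tent δ c t = 0 :=
  max_eq_left (by rw [sub_nonpos, one_le_div hδ]; exact h)

lemma eventually_tent_eq_zero {c t : ℝ} (h : t ≠ c) : ∀ᶠ δ in 𝓝[>] 0, tent δ c t = 0 := by
  have hpos : 0 < |t - c| := abs_pos.2 (sub_ne_zero.2 h)
  filter_upwards [self_mem_nhdsWithin, nhdsWithin_le_nhds (eventually_lt_nhds hpos)]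
    with δ hδ hlt
  exact tent_eq_zero hδ hlt.le

section notch

variable {ι : Type*} [Fintype ι] (x s : ι → ℝ)

/-- Clipping at `-1` keeps `|notch x s δ| ≤ 1` even where the tents overlap. -/
noncomputable def notch (δ t : ℝ) : ℝ := max (-1) (1 - ∑ i, (1 - s i) * tent δ (x i) t)

lemma continuous_notch (δ : ℝ) : Continuous (notch x s δ) := by
  unfold notch
  have := continuous_tent δ
  fun_prop

lemma abs_notch_le_one (hs : ∀ i, s i ≤ 1) (δ t : ℝ) : |notch x s δ t| ≤ 1 := by
  have hsum : 0 ≤ ∑ i, (1 - s i) * tent δ (x i) t :=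
    Finset.sum_nonneg fun i _ => mul_nonneg (sub_nonneg.2 (hs i)) (tent_nonneg _ _ _)
  exact abs_le.2 ⟨le_max_left _ _, max_le (by norm_num) (by linarith)⟩

lemma notch_eq_one {δ t : ℝ} (h : ∀ i, tent δ (x i) t = 0) : notch x s δ t = 1 := by
  simp [notch, h]

lemma notch_apply {δ : ℝ} (hs : ∀ i, -1 ≤ s i) (j : ι)
    (h : ∀ i, i ≠ j → tent δ (x i) (x j) = 0) : notch x s δ (x j) = s j := by
  have hsum : ∑ i, (1 - s i) * tent δ (x i) (x j) = 1 - s j := by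
    rw [Finset.sum_eq_single j (fun i _ hij => by rw [h i hij, mul_zero]) (by simp), tent_self,
      mul_one]
  rw [notch, hsum, sub_sub_cancel, max_eq_right (hs j)]

lemma eventually_notch_eq_one {t : ℝ} (ht : ∀ i, t ≠ x i) :
    ∀ᶠ δ in 𝓝[>] 0, notch x s δ t = 1 := by
  filter_upwards [eventually_all.2 fun i => eventually_tent_eq_zero (ht i)] with δ hδ
  exact notch_eq_one x s hδ

lemma eventually_notch_apply (hx : Function.Injective x) (hs : ∀ i, -1 ≤ s i) :
    ∀ᶠ δ in 𝓝[>] 0, ∀ j, notch x s δ (x j) = s j := by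
  refine eventually_all.2 fun j => ?_
  filter_upwards [eventually_all.2 fun i =>
    eventually_imp_distrib_left.2 fun (hij : i ≠ j) =>
      eventually_tent_eq_zero (c := x i) (hx.ne hij).symm] with δ hδ
  exact notch_apply x s hs j hδ

lemma tendsto_integral_notch (μ : Measure ℝ) [IsFiniteMeasure μ] [NullSingletonClass μ]
    (hs : ∀ i, s i ≤ 1) :
    Tendsto (fun δ => ∫ t, notch x s δ t ∂μ) (𝓝[>] 0) (𝓝 (μ.real univ)) := by
  have hlim : ∀ᵐ t ∂μ, Tendsto (fun δ => notch x s δ t) (𝓝[>] 0) (𝓝 1) := by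
    filter_upwards [(finite_range x).countable.ae_notMem μ] with t ht
    exact tendsto_nhds_of_eventually_eq (eventually_notch_eq_one x s fun i h => ht ⟨i, h.symm⟩)
  simpa using tendsto_integral_filter_of_dominated_convergence (fun _ => 1)
    (Eventually.of_forall fun δ => (continuous_notch x s δ).aestronglyMeasurable)
    (Eventually.of_forall fun δ => Eventually.of_forall fun t => abs_notch_le_one x s hs δ t)
    (integrable_const 1) hlim

end notch

lemma abs_sum_mul_le_sum_abs {ι : Type*} (s : Finset ι) (a b : ι → ℝ)
    (hb : ∀ i ∈ s, |b i| ≤ 1) : |∑ i ∈ s, a i * b i| ≤ ∑ i ∈ s, |a i| := by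
  refine (Finset.abs_sum_le_sum_abs _ _).trans (Finset.sum_le_sum fun i hi => ?_)
  rw [abs_mul]
  exact mul_le_of_le_one_right (abs_nonneg _) (hb i hi)

lemma volume_univ_Icc_neg_one_one : volume (univ : Set (Icc (-1 : ℝ) 1)) = 2 := by
  rw [Measure.Subtype.volume_univ nullMeasurableSet_Icc, Real.volume_Icc]
  norm_num

instance isFiniteMeasure_volume_Icc_neg_one_one :
    IsFiniteMeasure (volume : Measure (Icc (-1 : ℝ) 1)) :=
  ⟨by simp [volume_univ_Icc_neg_one_one]⟩

lemma abs_integral_le_two (f : C(Icc (-1 : ℝ) 1, ℝ)) (hf : ‖f‖ ≤ 1) :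
    |∫ t, f t| ≤ 2 := by
  simpa [measureReal_def, volume_univ_Icc_neg_one_one] using
    norm_integral_le_of_norm_le_const (μ := volume)
      (Eventually.of_forall fun t => (f.norm_coe_le_norm t).trans hf)

lemma abs_half_integral_sub_sum_le {ι : Type*} [Fintype ι] (x : ι → Icc (-1 : ℝ) 1)
    (a : ι → ℝ) (f : C(Icc (-1 : ℝ) 1, ℝ)) (hf : ‖f‖ ≤ 1) :
    |(1 / 2) * (∫ t, f t) - ∑ i, a i * f (x i)| ≤ 1 + ∑ i, |a i| := by
  have hint := abs_integral_le_two f hf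
  have hsum := abs_sum_mul_le_sum_abs Finset.univ a (fun i => f (x i))
    fun i _ => (f.norm_coe_le_norm (x i)).trans hf
  calc |(1 / 2) * (∫ t, f t) - ∑ i, a i * f (x i)|
      ≤ |(1 / 2) * (∫ t, f t)| + |∑ i, a i * f (x i)| := abs_sub _ _
    _ ≤ 1 + ∑ i, |a i| := by rw [abs_mul, abs_of_pos one_half_pos]; linarith

lemma abs_neg_sign_le_one (r : ℝ) : |-(SignType.sign r : ℝ)| ≤ 1 := by
  rcases lt_trichotomy r 0 with h | h | h <;> simp [h]

section signNotch

variable {ι : Type*} [Fintype ι] (x : ι → Icc (-1 : ℝ) 1) (a : ι → ℝ)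

noncomputable def signNotch (δ : ℝ) : C(Icc (-1 : ℝ) 1, ℝ) :=
  ⟨fun t => notch (fun i => (x i : ℝ)) (fun i => -SignType.sign (a i)) δ t,
    (continuous_notch _ _ δ).comp continuous_subtype_val⟩

lemma signNotch_apply (δ : ℝ) (t : Icc (-1 : ℝ) 1) :
    signNotch x a δ t = notch (fun i => (x i : ℝ)) (fun i => -SignType.sign (a i)) δ t :=
  rfl

lemma norm_signNotch_le (δ : ℝ) : ‖signNotch x a δ‖ ≤ 1 :=
  (ContinuousMap.norm_le _ zero_le_one).2 fun t =>
    abs_notch_le_one _ _ (fun i => (abs_le.1 (abs_neg_sign_le_one (a i))).2) δ t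

lemma tendsto_half_integral_sub_sum_signNotch (hx : Function.Injective x) :
    Tendsto (fun δ => (1 / 2) * (∫ t, signNotch x a δ t) - ∑ i, a i * signNotch x a δ (x i))
      (𝓝[>] 0) (𝓝 (1 + ∑ i, |a i|)) := by
  simp_rw [signNotch_apply]
  set y : ι → ℝ := fun i => x i
  set s : ι → ℝ := fun i => -SignType.sign (a i)
  have hs (i : ι) : |s i| ≤ 1 := abs_neg_sign_le_one (a i)
  have hint : Tendsto (fun δ => ∫ t : Icc (-1 : ℝ) 1, notch y s δ t) (𝓝[>] 0) (𝓝 2) := by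
    simp_rw [integral_subtype measurableSet_Icc (notch y s _)]
    convert tendsto_integral_notch y s (volume.restrict (Icc (-1) 1))
      fun i => (abs_le.1 (hs i)).2
    norm_num
  have hsum : ∀ᶠ δ in 𝓝[>] 0, ∑ i, a i * notch y s δ (y i) = -∑ i, |a i| := by
    filter_upwards [eventually_notch_apply y s (Subtype.val_injective.comp hx)
      fun i => (abs_le.1 (hs i)).1] with δ hδ
    simp only [hδ, s, mul_neg, self_mul_sign, Finset.sum_neg_distrib]
  have hlim := (hint.const_mul (1 / 2)).sub_const (-∑ i, |a i|)
  rw [show (1 : ℝ) / 2 * 2 - -∑ i, |a i| = 1 + ∑ i, |a i| by ring] at hlim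
  exact hlim.congr' (by filter_upwards [hsum] with δ hδ; rw [hδ])

end signNotch

/-- For distinct points `x₁, …, x_m ∈ [−1,1]`, the dual norm on `C[−1,1]` of
`f ↦ (1/2)∫_{−1}^1 f − Σᵢ aᵢ f(xᵢ)` equals `1 + Σᵢ |aᵢ|`. -/
theorem stmt_9 {m : ℕ} (x : Fin m → Set.Icc (-1 : ℝ) 1)
    (hx : Function.Injective x) (a : Fin m → ℝ) :
    sSup {r : ℝ | ∃ f : C(Set.Icc (-1 : ℝ) 1, ℝ), ‖f‖ ≤ 1 ∧
        r = |(1 / 2) * (∫ t : Set.Icc (-1 : ℝ) 1, f t) - ∑ i, a i * f (x i)|}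
      = 1 + ∑ i, |a i| := by
  set S := {r : ℝ | ∃ f : C(Set.Icc (-1 : ℝ) 1, ℝ), ‖f‖ ≤ 1 ∧
    r = |(1 / 2) * (∫ t : Set.Icc (-1 : ℝ) 1, f t) - ∑ i, a i * f (x i)|}
  have hbound : ∀ r ∈ S, r ≤ 1 + ∑ i, |a i| := by
    rintro r ⟨f, hf, rfl⟩
    exact abs_half_integral_sub_sum_le x a f hf
  refine le_antisymm (Real.sSup_le hbound (by positivity)) ?_
  have hlim := (tendsto_half_integral_sub_sum_signNotch x a hx).abs
  rw [abs_of_nonneg (by positivity)] at hlim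
  exact le_of_tendsto' hlim fun δ =>
    le_csSup ⟨_, hbound⟩ ⟨signNotch x a δ, norm_signNotch_le x a δ, rfl⟩
end

section
/- Positive semidefiniteness of Chebyshev-moment Toeplitz matrices: if σ is a nonnegative Borel measure on [−1,1] and x ∈ ℝ^N is defined by x_k = ∫_{−1}^1 T_{k−1}(t) dσ(t) for k ∈ [1:N], where T_j is the j-th Chebyshev polynomial of the first kind, then Toep_N(x) is positive semidefinite. -/
/-!
Substituting `t = cos θ` gives `T_{|i-j|}(t) = cos ((i - j) θ) = cos iθ cos jθ + sin iθ sin jθ`,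
so the Toeplitz matrix of Chebyshev moments is the sum of the Gram matrices in `L²(σ)` of the
functions `t ↦ cos (i arccos t)` and `t ↦ sin (i arccos t)`, and Gram matrices are positive
semidefinite.
-/

open MeasureTheory

/-- The symmetric `N×N` Toeplitz matrix built from `x ∈ ℝ^N`, with `(i,j)` entry `x_{|i−j|}`
(0-based indexing). -/
def Toep {N : ℕ} (x : Fin N → ℝ) : Matrix (Fin N) (Fin N) ℝ :=
  Matrix.of fun i j => x ⟨((i : ℤ) - (j : ℤ)).natAbs, by
    have hi := i.isLt; have hj := j.isLt; omega⟩

open Real Polynomial.Chebyshev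

theorem MeasureTheory.posSemidef_matrix_integral_mul {α ι : Type*} [MeasurableSpace α]
    {μ : Measure α} [Finite ι] {f : ι → α → ℝ} (hf : ∀ i, MemLp (f i) 2 μ) :
    (Matrix.of fun i j => ∫ t, f i t * f j t ∂μ).PosSemidef := by
  have hgram : Matrix.of (fun i j => ∫ t, f i t * f j t ∂μ) =
      Matrix.gram ℝ fun i => (hf i).toLp (f i) := by
    ext i j
    rw [Matrix.of_apply, Matrix.gram_apply, L2.inner_def]
    refine integral_congr_ae ?_
    filter_upwards [(hf i).coeFn_toLp, (hf j).coeFn_toLp] with t hi hj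
    rw [hi, hj, RCLike.inner_apply, conj_trivial, mul_comm]
  rw [hgram]
  exact Matrix.posSemidef_gram ℝ _

theorem Polynomial.Chebyshev.T_natAbs_sub_real_cos (i j : ℕ) (θ : ℝ) :
    (T ℝ ((i : ℤ) - j).natAbs).eval (cos θ) =
      cos (i * θ) * cos (j * θ) + sin (i * θ) * sin (j * θ) := by
  rw [T_natAbs, T_real_cos]
  push_cast
  rw [sub_mul, cos_sub]

/-- Positive semidefiniteness of Chebyshev-moment Toeplitz matrices: for a nonnegative
Borel measure `σ` on `[−1,1]`, the Toeplitz matrix of the Chebyshev moments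
`x_k = ∫ T_k dσ` (0-based) is positive semidefinite. -/
theorem stmt_14 {N : ℕ} (σ : Measure (Set.Icc (-1 : ℝ) 1)) [IsFiniteMeasure σ]
    (x : Fin N → ℝ)
    (hx : ∀ k : Fin N, x k = ∫ t : Set.Icc (-1 : ℝ) 1,
        (Polynomial.Chebyshev.T ℝ (k : ℤ)).eval (t : ℝ) ∂σ) :
    (Toep x).PosSemidef := by
  have memLp_of_continuous {f : Set.Icc (-1 : ℝ) 1 → ℝ} (hf : Continuous f) : MemLp f 2 σ :=
    hf.memLp_of_hasCompactSupport (.of_compactSpace f)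
  let c (i : Fin N) (t : Set.Icc (-1 : ℝ) 1) := cos (i * arccos t)
  let s (i : Fin N) (t : Set.Icc (-1 : ℝ) 1) := sin (i * arccos t)
  have hc i : MemLp (c i) 2 σ := memLp_of_continuous (by fun_prop)
  have hs i : MemLp (s i) 2 σ := memLp_of_continuous (by fun_prop)
  have hToep : Toep x = Matrix.of (fun i j => ∫ t, c i t * c j t ∂σ) +
      Matrix.of (fun i j => ∫ t, s i t * s j t ∂σ) := by
    ext i j
    simp only [Toep, Matrix.add_apply, Matrix.of_apply, hx]
    calc _ = ∫ t, (c i t * c j t + s i t * s j t) ∂σ :=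
          integral_congr_ae (.of_forall fun t => by
            dsimp only [c, s]
            rw [← T_natAbs_sub_real_cos, cos_arccos t.2.1 t.2.2])
      _ = _ := integral_add ((hc i).integrable_mul (hc j)) ((hs i).integrable_mul (hs j))
  rw [hToep]
  exact (posSemidef_matrix_integral_mul hc).add (posSemidef_matrix_integral_mul hs)
end

section
/- Near-optimality certificate via measures: suppose a ∈ ℝ^m and signed Borel measures μ, ν on [−1,1] satisfy μ + ν = ρ − Σᵢ aᵢ λᵢ and ∫ v dμ = 0 for all polynomials v of degree < n, where ρ represents Q(f) = ∫ f dρ and λᵢ represents ℓᵢ(f) = ∫ f dλᵢ. Then for every f ∈ C[−1,1] with dist_∞(f, P_n) ≤ ε and ‖f‖_∞ ≤ κ, one has |Q(f) − Σᵢ aᵢ ℓᵢ(f)| ≤ ε |μ|([−1,1]) + κ |ν|([−1,1]). -/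
/-
The signed measure `ρ - ∑ aᵢ λᵢ = μ + ν` integrates `f` to `∫ f dμ + ∫ f dν`. The functional
`f ↦ ∫ f dμ` is `|μ|(univ)`-Lipschitz on `C[−1,1]` and vanishes on `P_n`, so it is bounded by
`|μ|(univ) · dist_∞(f, P_n)`; the second term is at most `‖f‖_∞ · |ν|(univ)`.
-/

open MeasureTheory
open scoped BigOperators

/-- Integral of a function against a signed measure, via its Jordan decomposition. -/
noncomputable def sInt (σ : SignedMeasure (Set.Icc (-1 : ℝ) 1))
    (f : Set.Icc (-1 : ℝ) 1 → ℝ) : ℝ :=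
  (∫ t, f t ∂σ.toJordanDecomposition.posPart) -
    ∫ t, f t ∂σ.toJordanDecomposition.negPart

/-- The subset of `C[−1,1]` consisting of (restrictions of) polynomials of degree `< n`. -/
def polySet (n : ℕ) : Set C(Set.Icc (-1 : ℝ) 1, ℝ) :=
  {g | ∃ p : Polynomial ℝ, p.degree < (n : ℕ) ∧ ∀ t, g t = p.eval (t : ℝ)}

open VectorMeasure
open scoped NNReal

theorem LipschitzWith.abs_le_mul_infDist {E : Type*} [PseudoMetricSpace E] {K : ℝ≥0}
    {L : E → ℝ} (hL : LipschitzWith K L) {S : Set E} (hS : S.Nonempty)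
    (hLS : ∀ y ∈ S, L y = 0) (x : E) : |L x| ≤ K * Metric.infDist x S := by
  have hbound : ∀ y ∈ S, |L x| ≤ K * dist x y := fun y hy => by
    simpa [hLS y hy, Real.dist_eq] using hL.dist_le_mul x y
  rcases K.zero_le_coe.eq_or_lt with hK | hK
  · obtain ⟨y, hy⟩ := hS
    simpa [← hK] using hbound y hy
  · rw [← div_le_iff₀' (by exact_mod_cast hK), Metric.le_infDist hS]
    exact fun y hy => (div_le_iff₀' (by exact_mod_cast hK)).2 (hbound y hy)

theorem ContinuousMap.integrable {α E : Type*} [TopologicalSpace α] [CompactSpace α]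
    [MeasurableSpace α] [OpensMeasurableSpace α] [NormedAddCommGroup E] (f : C(α, E))
    (μ : Measure α) [IsFiniteMeasure μ] : Integrable f μ :=
  f.continuous.integrable_of_hasCompactSupport (.of_compactSpace _)

namespace MeasureTheory.SignedMeasure

variable {α : Type*} [MeasurableSpace α]

instance isFiniteMeasure_variation (σ : SignedMeasure α) : IsFiniteMeasure σ.variation := by
  rw [← totalVariation_eq_variation, totalVariation]
  infer_instance

theorem integral_eq_integral_posPart_sub_integral_negPart (σ : SignedMeasure α) {f : α → ℝ}
    (hf : Integrable f σ.variation) :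
    ∫ᵛ x, f x ∂<•σ =
      (∫ x, f x ∂σ.toJordanDecomposition.posPart) - ∫ x, f x ∂σ.toJordanDecomposition.negPart := by
  rw [← totalVariation_eq_variation, totalVariation] at hf
  conv_lhs => rw [← σ.toSignedMeasure_toJordanDecomposition]
  rw [JordanDecomposition.toSignedMeasure, integral_sub_vectorMeasure, integral_toSignedMeasure,
    integral_toSignedMeasure]
  all_goals simp only [VectorMeasure.Integrable, Measure.variation_toSignedMeasure]
  · exact hf.mono_measure (Measure.le_add_right le_rfl)
  · exact hf.mono_measure (Measure.le_add_left le_rfl)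

variable [TopologicalSpace α] [CompactSpace α]

theorem norm_integral_le (σ : SignedMeasure α) (f : C(α, ℝ)) :
    ‖∫ᵛ x, f x ∂<•σ‖ ≤ ‖f‖ * σ.variation.real Set.univ := by
  have hB : ‖(ContinuousLinearMap.lsmul ℝ ℝ : ℝ →L[ℝ] ℝ →L[ℝ] ℝ).flip‖ ≤ 1 := by
    rw [ContinuousLinearMap.opNorm_flip]
    exact ContinuousLinearMap.opNorm_lsmul_le
  calc ‖∫ᵛ x, f x ∂<•σ‖
      ≤ ‖f‖ * ‖(ContinuousLinearMap.lsmul ℝ ℝ : ℝ →L[ℝ] ℝ →L[ℝ] ℝ).flip‖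
          * σ.variation.real Set.univ :=
        VectorMeasure.norm_integral_le_of_norm_le_const (.of_forall f.norm_coe_le_norm)
    _ ≤ ‖f‖ * σ.variation.real Set.univ := by
        gcongr
        exact mul_le_of_le_one_right (norm_nonneg f) hB

theorem lipschitzWith_integral [OpensMeasurableSpace α] (σ : SignedMeasure α) :
    LipschitzWith (σ.variation Set.univ).toNNReal (fun f : C(α, ℝ) => ∫ᵛ x, f x ∂<•σ) := by
  refine LipschitzWith.of_dist_le_mul fun f g => ?_
  rw [dist_eq_norm, dist_eq_norm, ← VectorMeasure.integral_sub (f.integrable _) (g.integrable _),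
    ENNReal.coe_toNNReal_eq_toReal, mul_comm]
  exact norm_integral_le σ (f - g)

end MeasureTheory.SignedMeasure

theorem sInt_eq_integral (σ : SignedMeasure (Set.Icc (-1 : ℝ) 1))
    (f : C(Set.Icc (-1 : ℝ) 1, ℝ)) :
    sInt σ f = ∫ᵛ x, f x ∂<•σ :=
  (σ.integral_eq_integral_posPart_sub_integral_negPart (f.integrable _)).symm

theorem zero_mem_polySet (n : ℕ) : 0 ∈ polySet n :=
  ⟨0, Polynomial.degree_zero.trans_lt (WithBot.bot_lt_coe n), fun t => by simp⟩

theorem stmt_15_general {m : ℕ} (n : ℕ) (ε κ : ℝ)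
    (ρ : SignedMeasure (Set.Icc (-1 : ℝ) 1))
    (lam : Fin m → SignedMeasure (Set.Icc (-1 : ℝ) 1))
    (a : Fin m → ℝ) (μ ν : SignedMeasure (Set.Icc (-1 : ℝ) 1))
    (hsum : μ + ν = ρ - ∑ i, a i • lam i)
    (hμ : ∀ p : Polynomial ℝ, p.degree < (n : ℕ) →
      sInt μ (fun t => p.eval (t : ℝ)) = 0) :
    ∀ f : C(Set.Icc (-1 : ℝ) 1, ℝ),
      Metric.infDist f (polySet n) ≤ ε → ‖f‖ ≤ κ →
      |sInt ρ f - ∑ i, a i * sInt (lam i) f|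
        ≤ ε * (μ.totalVariation Set.univ).toReal
          + κ * (ν.totalVariation Set.univ).toReal := by
  intro f hdist hnorm
  have hsplit : sInt ρ f - ∑ i, a i * sInt (lam i) f = ∫ᵛ x, f x ∂<•μ + ∫ᵛ x, f x ∂<•ν := by
    simp only [sInt_eq_integral, ← smul_eq_mul, ← integral_smul_vectorMeasure]
    rw [← integral_finsetSum_vectorMeasure, ← integral_sub_vectorMeasure, ← hsum,
      integral_add_vectorMeasure]
    all_goals first | exact f.integrable _ | exact fun i _ => f.integrable _
  have hμf : |∫ᵛ x, f x ∂<•μ|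
      ≤ (μ.totalVariation Set.univ).toReal * Metric.infDist f (polySet n) := by
    rw [μ.totalVariation_eq_variation, ← ENNReal.coe_toNNReal_eq_toReal]
    refine μ.lipschitzWith_integral.abs_le_mul_infDist ⟨0, zero_mem_polySet n⟩ ?_ f
    rintro g ⟨p, hp, hgp⟩
    rw [← sInt_eq_integral, ← hμ p hp]
    exact congrArg _ (funext hgp)
  have hνf : |∫ᵛ x, f x ∂<•ν| ≤ ‖f‖ * (ν.totalVariation Set.univ).toReal := by
    rw [ν.totalVariation_eq_variation]
    exact ν.norm_integral_le f
  rw [hsplit]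
  calc _ ≤ |∫ᵛ x, f x ∂<•μ| + |∫ᵛ x, f x ∂<•ν| := abs_add_le _ _
    _ ≤ (μ.totalVariation Set.univ).toReal * Metric.infDist f (polySet n)
          + ‖f‖ * (ν.totalVariation Set.univ).toReal := add_le_add hμf hνf
    _ ≤ _ := by rw [mul_comm ε]; gcongr

/-- Near-optimality certificate via measures: if `μ + ν = ρ − Σᵢ aᵢ λᵢ` and `μ` annihilates
polynomials of degree `< n`, then for every `f` with `dist_∞(f, P_n) ≤ ε` and `‖f‖_∞ ≤ κ`,
`|Q(f) − Σᵢ aᵢ ℓᵢ(f)| ≤ ε|μ|([−1,1]) + κ|ν|([−1,1])`. -/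
theorem stmt_15 {m : ℕ} (n : ℕ) (ε κ : ℝ) (hε : 0 < ε) (hκ : 0 < κ)
    (ρ : SignedMeasure (Set.Icc (-1 : ℝ) 1))
    (lam : Fin m → SignedMeasure (Set.Icc (-1 : ℝ) 1))
    (a : Fin m → ℝ) (μ ν : SignedMeasure (Set.Icc (-1 : ℝ) 1))
    (hsum : μ + ν = ρ - ∑ i, a i • lam i)
    (hμ : ∀ p : Polynomial ℝ, p.degree < (n : ℕ) →
      sInt μ (fun t => p.eval (t : ℝ)) = 0) :
    ∀ f : C(Set.Icc (-1 : ℝ) 1, ℝ),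
      Metric.infDist f (polySet n) ≤ ε → ‖f‖ ≤ κ →
      |sInt ρ f - ∑ i, a i * sInt (lam i) f|
        ≤ ε * (μ.totalVariation Set.univ).toReal
          + κ * (ν.totalVariation Set.univ).toReal :=
  stmt_15_general n ε κ ρ lam a μ ν hsum hμ
end
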